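/- For the six points p₁=(1,0,1), p₂=(1,0,-1), p₃=(0,1,0), q₁=(0,1,1), q₂=(0,1,-1), q₃=(1,0,0) in RP², one has ∑_{i<j} d(pᵢ,pⱼ) + ∑_{i<j} d(qᵢ,qⱼ) = 3π and ∑_{i,j} d(pᵢ,qⱼ) = 17π/6; in particular the first sum strictly exceeds the second. -/
import Mathlib


open Finset

/-- Geodesic distance on `RP²` in terms of nonzero representative vectors in `ℝ³`:
`d(x,y) = arccos(|(x,y)| / (‖x‖‖y‖))`, with `(x,y)` the Euclidean dot product. -/
noncomputable def rp2Dist (x y : Fin 3 → ℝ) : ℝ :=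
  Real.arccos (|∑ i, x i * y i| /
    (Real.sqrt (∑ i, x i * x i) * Real.sqrt (∑ i, y i * y i)))

lemma arccos_half : Real.arccos (1/2) = Real.pi / 3 := by
  rw [← Real.cos_pi_div_three]
  exact Real.arccos_cos (by positivity) (by linarith [Real.pi_pos])

lemma arccos_sqrt2_half : Real.arccos (Real.sqrt 2 / 2) = Real.pi / 4 := by
  rw [← Real.cos_pi_div_four]
  exact Real.arccos_cos (by positivity) (by linarith [Real.pi_pos])

lemma inv_sqrt2 : 1 / Real.sqrt 2 = Real.sqrt 2 / 2 := by
  rw [eq_div_iff (by norm_num), div_mul_eq_mul_div, one_mul, Real.div_sqrt]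

lemma arccos_inv_sqrt2 : Real.arccos (Real.sqrt 2)⁻¹ = Real.pi / 4 := by
  rw [inv_eq_one_div, inv_sqrt2, arccos_sqrt2_half]

/-- For `p₁=(1,0,1)`, `p₂=(1,0,-1)`, `p₃=(0,1,0)`, `q₁=(0,1,1)`, `q₂=(0,1,-1)`,
`q₃=(1,0,0)` in `RP²`, the sum of the pairwise distances among the `pᵢ` plus that
among the `qᵢ` equals `3π`, while `∑ᵢⱼ d(pᵢ,qⱼ) = 17π/6`; in particular the former
strictly exceeds the latter. -/
theorem rp2_six_points_distance_sums :
    let p : Fin 3 → (Fin 3 → ℝ) := ![![1,0,1], ![1,0,-1], ![0,1,0]]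
    let q : Fin 3 → (Fin 3 → ℝ) := ![![0,1,1], ![0,1,-1], ![1,0,0]]
    ((∑ i, ∑ j, if i < j then rp2Dist (p i) (p j) else 0) +
      (∑ i, ∑ j, if i < j then rp2Dist (q i) (q j) else 0) = 3 * Real.pi) ∧
    (∑ i, ∑ j, rp2Dist (p i) (q j) = 17 * Real.pi / 6) ∧
    (∑ i, ∑ j, rp2Dist (p i) (q j) <
      (∑ i, ∑ j, if i < j then rp2Dist (p i) (p j) else 0) +
      (∑ i, ∑ j, if i < j then rp2Dist (q i) (q j) else 0)) := by
  intro p q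
  have s2 : Real.sqrt 2 * Real.sqrt 2 = 2 := Real.mul_self_sqrt (by norm_num)
  have hsum1 : (∑ i, ∑ j, if i < j then rp2Dist (p i) (p j) else 0) +
      (∑ i, ∑ j, if i < j then rp2Dist (q i) (q j) else 0) = 3 * Real.pi := by
    simp only [p, q, Fin.sum_univ_three, rp2Dist, Matrix.cons_val_zero,
      Matrix.cons_val_one, Matrix.head_cons, Matrix.cons_val_two, Matrix.tail_cons]
    norm_num [Real.arccos_zero, show ((0:Fin 3) < 2) from by decide,
      show ((1:Fin 3) < 2) from by decide, show ((2:Fin 3) ≠ 0) from by decide]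
    ring
  have hsum2 : (∑ i, ∑ j, rp2Dist (p i) (q j)) = 17 * Real.pi / 6 := by
    simp only [p, q, Fin.sum_univ_three, rp2Dist, Matrix.cons_val_zero,
      Matrix.cons_val_one, Matrix.head_cons, Matrix.cons_val_two, Matrix.tail_cons]
    norm_num [Real.arccos_zero, s2, Real.sqrt_one, inv_sqrt2, arccos_half,
      arccos_sqrt2_half, arccos_inv_sqrt2]
    ring
  refine ⟨hsum1, hsum2, ?_⟩
  rw [hsum1, hsum2]
  linarith [Real.pi_pos]
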